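/- Let P be a finite poset, x_i ∈ P, and Q = ⟨n⟩ an n-element chain. For a linear extension f of P, let k_f + 1 be the number of positions at which f(x_i) can be placed between max{f(s) : s ≤_P x_i, s ≠ x_i} and min{f(r) : r ≥_P x_i, r ≠ x_i} (i.e., |T_f| = k_f + 1 for the block of linear extensions agreeing with f off x_i). Then the fiber over T_f in L(P ∘_{x_i} ⟨n⟩) under the projection sending a linear extension to its induced extension of P (placing x_i at the minimum of the image of Q) has exactly multichoose(k_f + 1, n) = C(k_f + n, n) elements. -/

import Mathlib

open scoped Lex

/-- A finite poset is a chain if any two elements are comparable. -/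
def IsChainPoset (R : Type*) [PartialOrder R] : Prop := ∀ x y : R, x ≤ y ∨ y ≤ x

/-- Linear extensions of a finite poset `R`: order-preserving bijective labelings
by `{1, …, |R|}` (here modeled by `Fin (card R)`). -/
def LinExt (R : Type*) [PartialOrder R] [Fintype R] :=
  {f : R ≃ Fin (Fintype.card R) // ∀ x y : R, x < y → f x < f y}

/-- `e(R)`: the number of linear extensions of `R`. -/
noncomputable def numExt (R : Type*) [PartialOrder R] [Fintype R] : ℕ := Nat.card (LinExt R)

/-- The number of linear extensions of `R` placing `x` below `y`. -/
noncomputable def numBelow (R : Type*) [PartialOrder R] [Fintype R] (x y : R) : ℕ :=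
  Nat.card {f : LinExt R // f.1 x < f.1 y}

/-- The number of linear extensions of `R` placing `a` below `b` and `c` below `d`. -/
noncomputable def numBelow2 (R : Type*) [PartialOrder R] [Fintype R] (a b c d : R) : ℕ :=
  Nat.card {f : LinExt R // f.1 a < f.1 b ∧ f.1 c < f.1 d}

/-- `ℙ_R(x < y)`: the fraction of linear extensions of `R` placing `x` below `y`. -/
noncomputable def probBelow (R : Type*) [PartialOrder R] [Fintype R] (x y : R) : ℚ :=
  (numBelow R x y : ℚ) / (numExt R : ℚ)

/-- `δ(R) = max_{x ≠ y} min {ℙ_R(x<y), ℙ_R(y<x)}` (and `0` for chains / small posets). -/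
noncomputable def delta (R : Type*) [PartialOrder R] [Fintype R] [DecidableEq R] : ℚ :=
  Finset.univ.fold max 0 (fun xy : R × R =>
    if xy.1 = xy.2 then 0 else min (probBelow R xy.1 xy.2) (probBelow R xy.2 xy.1))

/-- The lexicographic sum `P ∘_i Q`: the poset obtained from `P` by replacing the
point `i` by the poset `Q`, elements of `Q` inheriting all comparabilities of `i`. -/
def LexAt (P : Type*) (i : P) (Q : Type*) := {p : P // p ≠ i} ⊕ Q

instance LexAt.instPartialOrder (P : Type*) [PartialOrder P] (i : P) (Q : Type*)
    [PartialOrder Q] : PartialOrder (LexAt P i Q) where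
  le x y :=
    match x, y with
    | .inl a, .inl b => a.1 ≤ b.1
    | .inl a, .inr _ => a.1 < i
    | .inr _, .inl b => i < b.1
    | .inr q, .inr q' => q ≤ q'
  le_refl x := by cases x <;> exact le_refl _
  le_trans x y z hxy hyz := by
    cases x <;> cases y <;> cases z <;>
    first
      | exact hxy
      | exact hyz
      | exact le_trans hxy hyz
      | exact lt_of_le_of_lt hxy hyz
      | exact lt_of_lt_of_le hxy hyz
      | exact le_of_lt (lt_trans hxy hyz)
      | exact absurd (lt_trans hxy hyz) (lt_irrefl i)
  le_antisymm x y hxy hyx := by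
    cases x <;> cases y <;>
    first
      | exact congrArg Sum.inl (Subtype.ext (le_antisymm hxy hyx))
      | exact congrArg Sum.inr (le_antisymm hxy hyx)
      | exact absurd (lt_trans hxy hyx) (lt_irrefl i)
      | exact absurd (lt_trans hyx hxy) (lt_irrefl i)

instance LexAt.instFintype (P : Type*) [Fintype P] [DecidableEq P] (i : P) (Q : Type*)
    [Fintype Q] : Fintype (LexAt P i Q) := inferInstanceAs (Fintype ({p : P // p ≠ i} ⊕ Q))

instance LexAt.instDecidableEq (P : Type*) [DecidableEq P] (i : P) (Q : Type*)
    [DecidableEq Q] : DecidableEq (LexAt P i Q) :=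
  inferInstanceAs (DecidableEq ({p : P // p ≠ i} ⊕ Q))


/-!
Let `A = P \ {xi}`. An extension `F` in the fiber orders `A` as `f` does, so it is determined
by the gaps `c q` = number of points of `A` below the `q`-th chain element. The gaps form a
monotone `n`-tuple of admissible positions (above every predecessor and below every successor
of `xi`), and conversely every such tuple is realised by exactly one `F`: rank the points by a
lexicographic key. So the fiber is counted by `n`-multisets of admissible gaps,
`C(k + n - 1, n)` with `k` the number of admissible gaps, and the case `n = 1` gives `k = |T_f|`.
-/

open Finset Function

theorem natCard_monotone_fin_eq_choose (α : Type*) [LinearOrder α] (n : ℕ) :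
    Nat.card {c : Fin n → α // Monotone c} = (Nat.card α + n - 1).choose n := by
  rw [← Sym.natCard_sym_eq_choose]
  -- a monotone tuple is the sorted list of its multiset of values
  refine Nat.card_congr (Equiv.ofBijective (fun c => ⟨List.ofFn c.1, by simp⟩) ⟨?_, ?_⟩)
  · rintro ⟨c, hc⟩ ⟨c', hc'⟩ h
    have hperm : List.Perm (List.ofFn c) (List.ofFn c') := Quotient.exact (congrArg Subtype.val h)
    exact Subtype.ext
      (List.ofFn_injective (hperm.eq_of_sortedLE hc.sortedLE_ofFn hc'.sortedLE_ofFn))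
  · intro s
    set l := s.1.sort (· ≤ ·)
    have hl : l.length = n := by simp [l, Multiset.length_sort]
    refine ⟨⟨l.get ∘ Fin.cast hl.symm, ?_⟩, Subtype.ext ?_⟩
    · exact (Multiset.pairwise_sort _ _).sortedLE.comp fun _ _ => (Fin.cast_le_cast _).2
    · have hofFn : List.ofFn (l.get ∘ Fin.cast hl.symm) = l :=
        (List.ofFn_congr hl l.get).symm.trans (List.ofFn_get l)
      simp only [hofFn, l, Multiset.sort_eq]

theorem natCard_monotone_fin_mem_eq_choose {α : Type*} [LinearOrder α] (S : Set α) (n : ℕ) :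
    Nat.card {c : Fin n → α // Monotone c ∧ ∀ q, c q ∈ S} =
      (Nat.card S + n - 1).choose n := by
  rw [← natCard_monotone_fin_eq_choose S]
  exact Nat.card_congr
    { toFun c := ⟨fun q => ⟨c.1 q, c.2.2 q⟩, fun _ _ h => c.2.1 h⟩
      invFun c := ⟨fun q => c.1 q, fun _ _ h => c.2 h, fun q => (c.1 q).2⟩
      left_inv _ := rfl
      right_inv _ := rfl }

section CountLT

variable {X γ : Type*} [Fintype X] [LinearOrder γ] (key : X → γ)

def countLT (v : γ) : ℕ := #{x | key x < v}

def rankBy (x : X) : ℕ := countLT key (key x)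

variable {key}

theorem countLT_mono : Monotone (countLT key) := fun _ _ huv =>
  card_le_card fun x hx => by
    simp only [mem_filter, mem_univ, true_and] at hx ⊢; exact hx.trans_le huv

theorem countLT_lt_countLT {u v : γ} {x : X} (hu : u ≤ key x) (hv : key x < v) :
    countLT key u < countLT key v :=
  card_lt_card <| (ssubset_iff_of_subset fun y hy => by
    simp only [mem_filter, mem_univ, true_and] at hy ⊢; exact hy.trans (hu.trans_lt hv)).2
    ⟨x, by simpa using hv, by simpa using hu⟩

theorem countLT_congr {δ : Type*} [LinearOrder δ] {key' : X → δ} {v : γ} {v' : δ}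
    (h : ∀ x, key x < v ↔ key' x < v') : countLT key v = countLT key' v' := by
  simp only [countLT, h]

theorem rankBy_lt_card (x : X) : rankBy key x < Fintype.card X :=
  card_lt_univ_of_notMem (x := x) (by simp)

theorem rankBy_lt_rankBy_iff {x y : X} : rankBy key x < rankBy key y ↔ key x < key y :=
  ⟨fun h => lt_of_not_ge fun hyx => (countLT_mono hyx).not_gt h,
    fun h => countLT_lt_countLT le_rfl h⟩

theorem rankBy_injective (hkey : Injective key) : Injective (rankBy key) := by
  intro x y h
  by_contra hne
  rcases lt_or_gt_of_ne (hkey.ne hne) with hlt | hlt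
  · exact (rankBy_lt_rankBy_iff.2 hlt).ne h
  · exact (rankBy_lt_rankBy_iff.2 hlt).ne' h

theorem countLT_rankBy (hkey : Injective key) {t : ℕ} (ht : t ≤ Fintype.card X) :
    countLT (rankBy key) t = t := by
  have hinj := rankBy_injective hkey
  have himage : univ.image (rankBy key) = range (Fintype.card X) :=
    eq_of_subset_of_card_le (fun k hk => by
      obtain ⟨x, -, rfl⟩ := mem_image.1 hk; exact mem_range.2 (rankBy_lt_card x))
      (by rw [card_range, card_image_of_injective _ hinj, card_univ])
  have hrange : (range (Fintype.card X)).filter (· < t) = range t := by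
    ext k; simp only [mem_filter, mem_range]; omega
  rw [countLT, ← card_image_of_injective _ hinj, ← filter_image (p := (· < t)), himage, hrange,
    card_range]

theorem rankBy_equiv {N : ℕ} (G : X ≃ Fin N) (x : X) : rankBy G x = G x := by
  rw [rankBy, countLT, ← Fin.card_Iio, ← card_map G.toEmbedding]
  congr 1
  ext i
  simp

noncomputable def rankEquiv (hkey : Injective key) : X ≃ Fin (Fintype.card X) :=
  Equiv.ofBijective (fun x => ⟨rankBy key x, rankBy_lt_card x⟩)
    ((Fintype.bijective_iff_injective_and_card _).2
      ⟨fun _ _ h => rankBy_injective hkey (Fin.val_eq_of_eq h), (Fintype.card_fin _).symm⟩)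

theorem rankEquiv_lt_rankEquiv_iff (hkey : Injective key) {x y : X} :
    rankEquiv hkey x < rankEquiv hkey y ↔ key x < key y :=
  rankBy_lt_rankBy_iff

end CountLT

section Merge

variable {A β γ : Type*} [Fintype A] [LinearOrder β] [LinearOrder γ] {g : A → β} {n : ℕ}

/-- The `q`-th chain element sits just above the `c q` lowest points of `A`; ties between chain
elements are broken by `q`, and the second coordinate `n` puts a point of `A` above every chain
element of its own gap. -/
def mergeKey (g : A → β) (c : Fin n → ℕ) : A ⊕ Fin n → ℕ ×ₗ ℕ
  | .inl a => toLex (rankBy g a, n)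
  | .inr q => toLex (c q, q)

variable {c : Fin n → ℕ}

theorem mergeKey_inl_lt_inl {a b : A} :
    mergeKey g c (.inl a) < mergeKey g c (.inl b) ↔ g a < g b := by
  simp [mergeKey, Prod.Lex.toLex_lt_toLex, rankBy_lt_rankBy_iff]

theorem mergeKey_inl_lt_inr {a : A} {q : Fin n} :
    mergeKey g c (.inl a) < mergeKey g c (.inr q) ↔ rankBy g a < c q := by
  simp [mergeKey, Prod.Lex.toLex_lt_toLex, q.2.not_gt]

theorem mergeKey_inr_lt_inl {a : A} {q : Fin n} :
    mergeKey g c (.inr q) < mergeKey g c (.inl a) ↔ c q ≤ rankBy g a := by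
  simp [mergeKey, Prod.Lex.toLex_lt_toLex, q.2, le_iff_lt_or_eq]

theorem mergeKey_inr_lt_inr (hc : Monotone c) {q q' : Fin n} :
    mergeKey g c (.inr q) < mergeKey g c (.inr q') ↔ q < q' := by
  simp only [mergeKey, Prod.Lex.toLex_lt_toLex, ← Fin.lt_def]
  constructor
  · rintro (h | ⟨-, h⟩)
    · exact lt_of_not_ge fun h' => (hc h').not_gt h
    · exact h
  · intro h
    rcases (hc h.le).lt_or_eq with h' | h'
    · exact .inl h'
    · exact .inr ⟨h', h⟩

theorem mergeKey_injective (hg : Injective g) (c : Fin n → ℕ) : Injective (mergeKey g c) := by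
  rintro (a | q) (b | q') h <;> simp only [mergeKey, toLex_inj, Prod.mk.injEq] at h
  · exact congrArg _ (rankBy_injective hg h.1)
  · exact absurd h.2 (by omega)
  · exact absurd h.2 (by omega)
  · exact congrArg _ (Fin.ext h.2)

noncomputable def merge (hg : Injective g) (c : Fin n → ℕ) :
    A ⊕ Fin n ≃ Fin (Fintype.card (A ⊕ Fin n)) :=
  rankEquiv (mergeKey_injective hg c)

theorem merge_lt_merge_iff (hg : Injective g) {x y : A ⊕ Fin n} :
    merge hg c x < merge hg c y ↔ mergeKey g c x < mergeKey g c y :=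
  rankEquiv_lt_rankEquiv_iff _

def gap (F : A ⊕ Fin n → γ) (q : Fin n) : ℕ := countLT (F ∘ Sum.inl) (F (.inr q))

variable {F : A ⊕ Fin n → γ}

theorem gap_le_card (q : Fin n) : gap F q ≤ Fintype.card A := card_le_univ _

theorem gap_monotone (hF : Monotone (F ∘ Sum.inr)) : Monotone (gap F) :=
  fun _ _ h => countLT_mono (hF h)

section
variable (hA : ∀ a b, F (.inl a) < F (.inl b) ↔ g a < g b)
include hA

theorem rankBy_lt_gap_iff {a : A} {q : Fin n} :
    rankBy g a < gap F q ↔ F (.inl a) < F (.inr q) := by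
  rw [rankBy, countLT_congr fun b => (hA b a).symm, gap]
  exact ⟨fun h => lt_of_not_ge fun h' => (countLT_mono h').not_gt h,
    fun h => countLT_lt_countLT le_rfl h⟩

theorem gap_le_rankBy_iff (hF : Injective F) {a : A} {q : Fin n} :
    gap F q ≤ rankBy g a ↔ F (.inr q) < F (.inl a) := by
  rw [← not_lt, rankBy_lt_gap_iff hA, not_lt, le_iff_lt_or_eq,
    or_iff_left (hF.ne Sum.inr_ne_inl)]

theorem mergeKey_gap_lt_iff (hF : Injective F) (hB : StrictMono (F ∘ Sum.inr))
    (x y : A ⊕ Fin n) :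
    mergeKey g (gap F) x < mergeKey g (gap F) y ↔ F x < F y := by
  rcases x with a | q <;> rcases y with b | q'
  · exact mergeKey_inl_lt_inl.trans (hA a b).symm
  · exact mergeKey_inl_lt_inr.trans (rankBy_lt_gap_iff hA)
  · exact mergeKey_inr_lt_inl.trans (gap_le_rankBy_iff hA hF)
  · exact (mergeKey_inr_lt_inr (gap_monotone hB.monotone)).trans hB.lt_iff_lt.symm

end

theorem merge_gap (hg : Injective g) {F : A ⊕ Fin n ≃ Fin (Fintype.card (A ⊕ Fin n))}
    (hA : ∀ a b, F (.inl a) < F (.inl b) ↔ g a < g b) (hB : StrictMono (F ∘ Sum.inr)) :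
    merge hg (gap F) = F := by
  ext x
  change rankBy (mergeKey g (gap F)) x = F x
  rw [← rankBy_equiv F x]
  exact countLT_congr fun y => mergeKey_gap_lt_iff hA F.injective hB y x

theorem gap_merge (hg : Injective g) (hc : ∀ q, c q ≤ Fintype.card A) :
    gap (merge hg c) = c := by
  funext q
  rw [gap, ← countLT_rankBy hg (hc q)]
  exact countLT_congr fun a => (rankEquiv_lt_rankEquiv_iff _).trans mergeKey_inl_lt_inr

end Merge

namespace LexAt

variable {P Q : Type*} [PartialOrder P] [PartialOrder Q] {i : P}

theorem inl_lt_inl {a b : {p : P // p ≠ i}} :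
    @LT.lt (LexAt P i Q) _ (.inl a) (.inl b) ↔ a.1 < b.1 :=
  lt_iff_le_not_ge.symm

theorem inl_lt_inr {a : {p : P // p ≠ i}} {q : Q} :
    @LT.lt (LexAt P i Q) _ (.inl a) (.inr q) ↔ a.1 < i :=
  ⟨And.left, fun h => ⟨h, h.not_gt⟩⟩

theorem inr_lt_inl {a : {p : P // p ≠ i}} {q : Q} :
    @LT.lt (LexAt P i Q) _ (.inr q) (.inl a) ↔ i < a.1 :=
  ⟨And.left, fun h => ⟨h, h.not_gt⟩⟩

theorem inr_lt_inr {q q' : Q} : @LT.lt (LexAt P i Q) _ (.inr q) (.inr q') ↔ q < q' :=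
  lt_iff_le_not_ge.symm

variable (P i Q) [DecidableEq P] [Unique Q]

def orderIsoOfUnique : LexAt P i Q ≃o P where
  toFun
    | .inl a => a.1
    | .inr _ => i
  invFun p := if h : p = i then .inr default else .inl ⟨p, h⟩
  left_inv
    | .inl a => dif_neg a.2
    | .inr q => (dif_pos rfl).trans (congrArg _ (Unique.eq_default q).symm)
  right_inv p := by by_cases h : p = i <;> simp [h]
  map_rel_iff' := by
    rintro (a | q) (b | q')
    · exact Iff.rfl
    · exact (lt_iff_le_and_ne.trans (and_iff_left a.2)).symm
    · exact (lt_iff_le_and_ne.trans (and_iff_left (Ne.symm b.2))).symm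
    · exact iff_of_true le_rfl (Subsingleton.elim q q').le

theorem orderIsoOfUnique_symm_apply {a : {p : P // p ≠ i}} :
    (orderIsoOfUnique P Q i).symm a.1 = .inl a :=
  dif_neg a.2

end LexAt

namespace LinExt

variable {R S : Type*} [PartialOrder R] [Fintype R] [PartialOrder S] [Fintype S]

def map (e : R ≃o S) (f : LinExt R) : LinExt S :=
  ⟨e.symm.toEquiv.trans (f.1.trans (finCongr (Fintype.card_congr e.toEquiv))),
    fun _ _ h => f.2 _ _ (e.symm.lt_iff_lt.2 h)⟩

theorem map_apply_val (e : R ≃o S) (f : LinExt R) (x : R) :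
    ((map e f).1 (e x) : ℕ) = f.1 x := by
  simp [map]

def congr (e : R ≃o S) : LinExt R ≃ LinExt S where
  toFun := map e
  invFun := map e.symm
  left_inv f := Subtype.ext <| Equiv.ext fun x => Fin.ext <| by
    simpa [map_apply_val] using map_apply_val e.symm (map e f) (e x)
  right_inv f := Subtype.ext <| Equiv.ext fun x => Fin.ext <| by
    simpa [map_apply_val] using map_apply_val e (map e.symm f) (e.symm x)

theorem injective_comp_val (f : LinExt R) (s : R → Prop) :
    Injective (f.1 ∘ Subtype.val : Subtype s → _) :=
  f.1.injective.comp Subtype.val_injective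

theorem strictMono_inr {P Q : Type*} [PartialOrder P] [Fintype P] [DecidableEq P] {i : P}
    [PartialOrder Q] [Fintype Q] (F : LinExt (LexAt P i Q)) : StrictMono (F.1 ∘ Sum.inr) :=
  fun _ _ h => F.2 _ _ (LexAt.inr_lt_inr.2 h)

end LinExt

section Fiber

variable {P : Type*} [PartialOrder P] [Fintype P] [DecidableEq P] (xi : P) (f : LinExt P)

/-- A gap `j` places `xi` just above the `j` lowest points of `P \ {xi}` in the order `f`. -/
def admissibleGaps : Set ℕ :=
  {j | j ≤ Fintype.card {p : P // p ≠ xi} ∧ ∀ a : {p : P // p ≠ xi},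
    (a.1 < xi → rankBy (f.1 ∘ Subtype.val) a < j) ∧
      (xi < a.1 → j ≤ rankBy (f.1 ∘ Subtype.val) a)}

abbrev blockFiber (n : ℕ) :=
  {F : LinExt (LexAt P xi (Fin n)) // ∀ a b : {p : P // p ≠ xi},
    F.1 (Sum.inl a) < F.1 (Sum.inl b) ↔ f.1 a.1 < f.1 b.1}

variable {xi f} {n : ℕ}

theorem gap_mem_admissibleGaps (F : blockFiber xi f n) (q : Fin n) :
    gap F.1.1 q ∈ admissibleGaps xi f :=
  ⟨gap_le_card q, fun _ =>
    ⟨fun h => (rankBy_lt_gap_iff F.2).2 (F.1.2 _ _ (LexAt.inl_lt_inr.2 h)),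
      fun h => (gap_le_rankBy_iff F.2 F.1.1.injective).2 (F.1.2 _ _ (LexAt.inr_lt_inl.2 h))⟩⟩

theorem merge_lt_merge_of_lt {c : Fin n → ℕ} (hc : Monotone c)
    (hgap : ∀ q, c q ∈ admissibleGaps xi f) (x y : LexAt P xi (Fin n)) (hxy : x < y) :
    merge (f.injective_comp_val _) c x < merge (f.injective_comp_val _) c y := by
  refine (merge_lt_merge_iff _).2 ?_
  rcases x with a | q <;> rcases y with b | q'
  · exact mergeKey_inl_lt_inl.2 (f.2 _ _ (LexAt.inl_lt_inl.1 hxy))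
  · exact mergeKey_inl_lt_inr.2 (((hgap q').2 a).1 (LexAt.inl_lt_inr.1 hxy))
  · exact mergeKey_inr_lt_inl.2 (((hgap q).2 b).2 (LexAt.inr_lt_inl.1 hxy))
  · exact (mergeKey_inr_lt_inr hc).2 (LexAt.inr_lt_inr.1 hxy)

variable (xi f n)

noncomputable def blockFiberEquivGaps :
    blockFiber xi f n ≃
      {c : Fin n → ℕ // Monotone c ∧ ∀ q, c q ∈ admissibleGaps xi f} where
  toFun F := ⟨gap F.1.1, gap_monotone F.1.strictMono_inr.monotone, gap_mem_admissibleGaps F⟩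
  invFun c := ⟨⟨merge (f.injective_comp_val _) c.1, merge_lt_merge_of_lt c.2.1 c.2.2⟩,
    fun _ _ => (merge_lt_merge_iff (f.injective_comp_val _)).trans mergeKey_inl_lt_inl⟩
  left_inv F := Subtype.ext <| Subtype.ext <|
    merge_gap (f.injective_comp_val _) F.2 F.1.strictMono_inr
  right_inv c := Subtype.ext <| gap_merge (f.injective_comp_val _) fun q => (c.2.2 q).1

theorem card_blockFiber :
    Nat.card (blockFiber xi f n) = (Nat.card (admissibleGaps xi f) + n - 1).choose n := by
  rw [Nat.card_congr (blockFiberEquivGaps xi f n), natCard_monotone_fin_mem_eq_choose]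

def blockEquivBlockFiberOne :
    {g : LinExt P // ∀ a b : P, a ≠ xi → b ≠ xi → (g.1 a < g.1 b ↔ f.1 a < f.1 b)} ≃
      blockFiber xi f 1 :=
  let e := LexAt.orderIsoOfUnique P (Fin 1) xi
  (LinExt.congr e.symm).subtypeEquiv fun g => by
    have hval (a : {p : P // p ≠ xi}) : ((LinExt.congr e.symm g).1 (.inl a) : ℕ) = g.1 a.1 := by
      have h := LinExt.map_apply_val e.symm g a.1
      rwa [LexAt.orderIsoOfUnique_symm_apply] at h
    simp only [Fin.lt_def, hval]
    exact ⟨fun h a b => h a b a.2 b.2, fun h a b ha hb => h ⟨a, ha⟩ ⟨b, hb⟩⟩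

end Fiber

/-- the fiber over the block `T_f` (linear extensions of `P` with the same
relative order as `f` on `P \\ {x_i}`) of the projection `L(P ∘_{x_i} ⟨n⟩) → L(P)` has
exactly `multichoose (|T_f|, n) = C(|T_f| + n - 1, n)` elements. -/
theorem fiber_card_lexAt_chain (P : Type) [PartialOrder P] [Fintype P] [DecidableEq P]
    (xi : P) (n : ℕ) (f : LinExt P) :
    Nat.card {F : LinExt (LexAt P xi (Fin n)) //
        ∀ a b : {p : P // p ≠ xi},
          (F.1 (Sum.inl a) < F.1 (Sum.inl b) ↔ f.1 a.1 < f.1 b.1)} =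
      Nat.choose
        (Nat.card {g : LinExt P //
            ∀ a b : P, a ≠ xi → b ≠ xi → (g.1 a < g.1 b ↔ f.1 a < f.1 b)} + n - 1) n := by
  have hblock : Nat.card {g : LinExt P //
      ∀ a b : P, a ≠ xi → b ≠ xi → (g.1 a < g.1 b ↔ f.1 a < f.1 b)} =
      Nat.card (admissibleGaps xi f) := by
    rw [Nat.card_congr (blockEquivBlockFiberOne xi f), card_blockFiber, Nat.add_sub_cancel,
      Nat.choose_one_right]
  rw [card_blockFiber, hblock]
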